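/- Let P : ℝ² → ℝ be a submetry. Then there exist a unit vector v ∈ ℝ² and a constant c ∈ ℝ such that P(x) = ⟨x, v⟩ + c for all x, i.e., up to an additive constant P is an orthogonal projection onto a line; in particular every fiber of P is an affine line. -/

import Mathlib

/-! A submetry `P : E → ℝ` is 1-Lipschitz and the distance from a point to each fibre is
attained. Take `b` with `P b = P 0 - 1` and `‖b‖ = 1`, and for `t > 0` a point `a` with
`P a = P 0 + t` and `‖a‖ = t`. Then `t + 1 ≤ ‖a - b‖ ≤ ‖a‖ + ‖b‖`, so equality holds in the
triangle inequality and, by strict convexity, `a = t • v` with `v = -b`. Hence `P` is an isometry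
from the line `ℝ v` onto `ℝ`, and a 1-Lipschitz function which is an isometry on a line
`t ↦ t • v` must be `x ↦ ⟪x, v⟫ + P 0`: otherwise `|P x - P 0 - t| ≤ ‖x - t • v‖` fails for
`t` large. -/

open Metric

/-- `P` is a submetry, except that surjectivity, which follows, is not required. -/
def IsSubmetry {X Y : Type*} [PseudoMetricSpace X] [PseudoMetricSpace Y] (P : X → Y) : Prop :=
  ∀ x t, dist (P x) t = infDist x (P ⁻¹' {t})

theorem LipschitzWith.sameRay_neg {E : Type*} [NormedAddCommGroup E] [NormedSpace ℝ E]
    [StrictConvexSpace ℝ E] {f : E → ℝ} (hf : LipschitzWith 1 f) {a b : E}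
    (h : ‖a‖ + ‖b‖ ≤ f a - f b) : SameRay ℝ a (-b) := by
  have hab : f a - f b ≤ ‖a - b‖ := by
    simpa [dist_eq_norm] using (le_abs_self _).trans (hf.dist_le_mul a b)
  refine sameRay_iff_norm_add.mpr (le_antisymm (norm_add_le _ _) ?_)
  rw [norm_neg, ← sub_eq_add_neg]
  linarith

theorem eq_zero_of_forall_mul_le {c K : ℝ} (h : ∀ t, t * c ≤ K) : c = 0 := by
  by_contra hc
  have := h ((K + 1) / c)
  rw [div_mul_cancel₀ _ hc] at this
  linarith

theorem LipschitzWith.eq_inner_add_of_apply_smul {E : Type*} [NormedAddCommGroup E]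
    [InnerProductSpace ℝ E] {f : E → ℝ} (hf : LipschitzWith 1 f) {v : E} (hv : ‖v‖ = 1)
    (hline : ∀ t : ℝ, f (t • v) = f 0 + t) (x : E) : f x = inner ℝ x v + f 0 := by
  set a := f x - f 0
  have hsq : ∀ t : ℝ, (a - t) ^ 2 ≤ ‖x‖ ^ 2 - 2 * t * inner ℝ x v + t ^ 2 := by
    intro t
    have hdist : |a - t| ≤ ‖x - t • v‖ := by
      simpa [Real.dist_eq, dist_eq_norm, hline, a, sub_sub] using hf.dist_le_mul x (t • v)
    have hexp : ‖x - t • v‖ ^ 2 = ‖x‖ ^ 2 - 2 * t * inner ℝ x v + t ^ 2 := by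
      rw [norm_sub_sq_real, real_inner_smul_right, norm_smul, hv, Real.norm_eq_abs, mul_one,
        sq_abs]
      ring
    rw [← hexp, ← sq_abs]
    exact pow_le_pow_left₀ (abs_nonneg _) hdist 2
  have hcoef : 2 * (inner ℝ x v - a) = 0 :=
    eq_zero_of_forall_mul_le (K := ‖x‖ ^ 2 - a ^ 2) fun t => by nlinarith [hsq t]
  linarith

namespace IsSubmetry

section MetricSpace

variable {X Y : Type*} [PseudoMetricSpace X] {P : X → Y}

theorem lipschitzWith_one [PseudoMetricSpace Y] (hP : IsSubmetry P) : LipschitzWith 1 P :=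
  LipschitzWith.mk_one fun x y => (hP x (P y)).trans_le (infDist_le_dist_of_mem rfl)

variable [MetricSpace Y]

/-- An empty fibre would have junk `infDist` equal to `0`. -/
theorem surjective [Nonempty X] (hP : IsSubmetry P) : Function.Surjective P := by
  intro t
  by_contra! hne
  obtain ⟨x⟩ := ‹Nonempty X›
  have hempty : P ⁻¹' {t} = ∅ := Set.eq_empty_of_forall_notMem hne
  have : P x = t := dist_eq_zero.mp (by rw [hP x t, hempty, infDist_empty])
  exact hne x this

theorem exists_dist_eq [ProperSpace X] [Nonempty X] (hP : IsSubmetry P) (x : X) (t : Y) :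
    ∃ y, P y = t ∧ dist x y = dist (P x) t := by
  have hclosed : IsClosed (P ⁻¹' {t}) :=
    isClosed_singleton.preimage hP.lipschitzWith_one.continuous
  obtain ⟨y, hy, hyd⟩ := hclosed.exists_infDist_eq_dist (hP.surjective t) x
  exact ⟨y, hy, by rw [← hyd, hP x t]⟩

end MetricSpace

section NormedSpace

variable {E : Type*} [NormedAddCommGroup E] [ProperSpace E] {P : E → ℝ}

theorem exists_norm_eq (hP : IsSubmetry P) (s : ℝ) : ∃ y, P y = P 0 + s ∧ ‖y‖ = |s| := by
  obtain ⟨y, hy, hyd⟩ := hP.exists_dist_eq 0 (P 0 + s)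
  refine ⟨y, hy, ?_⟩
  rw [← dist_zero_left, hyd, Real.dist_eq, sub_add_cancel_left, abs_neg]

theorem exists_apply_smul_eq [NormedSpace ℝ E] [StrictConvexSpace ℝ E] (hP : IsSubmetry P) :
    ∃ v : E, ‖v‖ = 1 ∧ ∀ t : ℝ, P (t • v) = P 0 + t := by
  obtain ⟨b, hPb, hb⟩ := hP.exists_norm_eq (-1)
  rw [abs_neg, abs_one] at hb
  have hv : ‖-b‖ = 1 := by rw [norm_neg, hb]
  have hpos : ∀ t : ℝ, 0 < t → P (t • -b) = P 0 + t := by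
    intro t ht
    obtain ⟨a, hPa, ha⟩ := hP.exists_norm_eq t
    rw [abs_of_pos ht] at ha
    have hray : SameRay ℝ a (-b) :=
      hP.lipschitzWith_one.sameRay_neg (by rw [hPa, hPb, ha, hb]; linarith)
    have hat : t • -b = a := by simpa [ha, hv] using hray.norm_smul_eq
    rw [hat, hPa]
  refine ⟨-b, hv, fun t => ?_⟩
  rcases lt_trichotomy t 0 with ht | rfl | ht
  · obtain ⟨a, hPa, ha⟩ := hP.exists_norm_eq t
    rw [abs_of_neg ht] at ha
    have hPv : P (-b) = P 0 + 1 := by simpa using hpos 1 one_pos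
    have hray : SameRay ℝ (-b) (-a) :=
      hP.lipschitzWith_one.sameRay_neg (by rw [hPa, hPv, ha, hv]; linarith)
    have hat : -a = -t • -b := by simpa [ha, hv] using hray.norm_smul_eq
    rw [neg_smul, neg_inj] at hat
    rw [← hat, hPa]
  · simp
  · exact hpos t ht

end NormedSpace

theorem exists_eq_inner_add_const {E : Type*} [NormedAddCommGroup E] [InnerProductSpace ℝ E]
    [ProperSpace E] {P : E → ℝ} (hP : IsSubmetry P) :
    ∃ (v : E) (c : ℝ), ‖v‖ = 1 ∧ ∀ x, P x = inner ℝ x v + c := by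
  obtain ⟨v, hv, hline⟩ := hP.exists_apply_smul_eq
  exact ⟨v, P 0, hv, hP.lipschitzWith_one.eq_inner_add_of_apply_smul hv hline⟩

end IsSubmetry

theorem submetry_R2_to_R_is_projection_general
    (P : EuclideanSpace ℝ (Fin 2) → ℝ)
    (hP : ∀ (x : EuclideanSpace ℝ (Fin 2)) (t : ℝ),
      dist (P x) t = Metric.infDist x (P ⁻¹' {t})) :
    ∃ (v : EuclideanSpace ℝ (Fin 2)) (c : ℝ), ‖v‖ = 1 ∧
      (∀ x, P x = inner ℝ x v + c) ∧
      (∀ t : ℝ, P ⁻¹' {t} = {x | (inner ℝ x v : ℝ) = t - c}) := by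
  obtain ⟨v, c, hv, hPx⟩ := IsSubmetry.exists_eq_inner_add_const hP
  refine ⟨v, c, hv, hPx, fun t => Set.ext fun x => ?_⟩
  simp only [Set.mem_preimage, Set.mem_singleton_iff, Set.mem_ofPred_eq, hPx x, eq_sub_iff_add_eq]

/-- A submetry `P : ℝ² → ℝ` is, up to an additive constant, the orthogonal
projection onto a line: `P x = ⟪x, v⟫ + c` for a unit vector `v`. -/
theorem submetry_R2_to_R_is_projection
    (P : EuclideanSpace ℝ (Fin 2) → ℝ)
    (hsurj : Function.Surjective P)
    (hP : ∀ (x : EuclideanSpace ℝ (Fin 2)) (t : ℝ),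
      dist (P x) t = Metric.infDist x (P ⁻¹' {t})) :
    ∃ (v : EuclideanSpace ℝ (Fin 2)) (c : ℝ), ‖v‖ = 1 ∧
      (∀ x, P x = inner ℝ x v + c) ∧
      (∀ t : ℝ, P ⁻¹' {t} = {x | (inner ℝ x v : ℝ) = t - c}) :=
  submetry_R2_to_R_is_projection_general P hP
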